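/- Let Γ be a discrete subgroup of SL(2,ℝ), let δ > 0 and λ ∈ ℤ with λ + 2δ ≥ 1, let m ≥ 0, and let h ∈ M_{λ+2δ}(Γ) be a modular form. Then the polynomial (Ξ^{λ+2δ}_m h)(z,X) = Σ_{r=0}^m [m! (λ+2δ−1)! / (r! (m−r)! (m−r+2δ+λ−1)!)] h^{(m−r)}(z) X^r is a quasimodular polynomial belonging to QP^m_{λ+2m+2δ}(Γ), and its leading coefficient satisfies 𝔖_m(Ξ^{λ+2δ}_m h) = h. -/

import Mathlib

noncomputable section

open Complex Polynomial

/-- The upper half plane `ℍ`, as a subset of `ℂ`. -/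
def UHP : Set ℂ := {z : ℂ | 0 < z.im}

/-- `SL(2, ℝ)`. -/
abbrev SL2R := Matrix.SpecialLinearGroup (Fin 2) ℝ

/-- `GL⁺(2, ℝ)`, the group of real 2×2 matrices of positive determinant. -/
abbrev GL2P := Matrix.GLPos (Fin 2) ℝ

/-- Topology on `SL(2,ℝ)` induced from the space of matrices (used to speak of
discrete subgroups of `SL(2,ℝ)`). -/
instance : TopologicalSpace SL2R :=
  TopologicalSpace.induced (fun g : SL2R => (g : Matrix (Fin 2) (Fin 2) ℝ)) inferInstance

/-- A function belongs to `𝓕` if it is holomorphic on the upper half plane. -/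
def Hol (f : ℂ → ℂ) : Prop := DifferentiableOn ℂ f UHP

/-- `𝔍(γ, z) = cz + d` for `γ ∈ SL(2, ℝ)`. -/
def jJ (γ : SL2R) (z : ℂ) : ℂ := (γ 1 0 : ℝ) * z + (γ 1 1 : ℝ)

/-- `𝔎(γ, z) = c/(cz + d)` for `γ ∈ SL(2, ℝ)`. -/
def kK (γ : SL2R) (z : ℂ) : ℂ := (γ 1 0 : ℝ) / jJ γ z

/-- `γ z = (az+b)/(cz+d)` for `γ ∈ SL(2, ℝ)`. -/
def mact (γ : SL2R) (z : ℂ) : ℂ := ((γ 0 0 : ℝ) * z + (γ 0 1 : ℝ)) / jJ γ z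

/-- The underlying real matrix of an element of `GL⁺(2, ℝ)`. -/
def gmat (α : GL2P) : Matrix (Fin 2) (Fin 2) ℝ :=
  ((α : Matrix.GeneralLinearGroup (Fin 2) ℝ) : Matrix (Fin 2) (Fin 2) ℝ)

/-- The determinant of an element of `GL⁺(2, ℝ)`. -/
def gdet (α : GL2P) : ℝ := (gmat α).det

/-- `𝔍(α, z) = cz + d` for `α ∈ GL⁺(2, ℝ)`. -/
def gJ (α : GL2P) (z : ℂ) : ℂ := (gmat α 1 0 : ℝ) * z + (gmat α 1 1 : ℝ)

/-- `𝔎(α, z) = c/(cz + d)` for `α ∈ GL⁺(2, ℝ)`. -/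
def gK (α : GL2P) (z : ℂ) : ℂ := (gmat α 1 0 : ℝ) / gJ α z

/-- `α z = (az+b)/(cz+d)` for `α ∈ GL⁺(2, ℝ)`. -/
def gact (α : GL2P) (z : ℂ) : ℂ := ((gmat α 0 0 : ℝ) * z + (gmat α 0 1 : ℝ)) / gJ α z

/-- `(det α)^(μ/2)` for `α ∈ GL⁺(2, ℝ)` and `μ ∈ ℤ`. -/
def detpow (α : GL2P) (μ : ℤ) : ℂ := ((gdet α ^ ((μ : ℝ) / 2) : ℝ) : ℂ)

/-- The weight-`ξ` action `F ∥_ξ γ` of `SL(2,ℝ)` on polynomials over `𝓕`: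
`(F ∥_ξ γ)(z, X) = 𝔍(γ,z)^(-ξ) F(γz, 𝔍(γ,z)^2 (X - 𝔎(γ,z)))`. -/
def polyAct (ξ : ℤ) (F : ℂ → Polynomial ℂ) (γ : SL2R) : ℂ → Polynomial ℂ := fun z =>
  Polynomial.C (jJ γ z ^ (-ξ)) *
    (F (mact γ z)).comp (Polynomial.C (jJ γ z ^ 2) * (Polynomial.X - Polynomial.C (kK γ z)))

/-- The weight-`ξ` action `F ∥_ξ α` of `GL⁺(2,ℝ)` on polynomials over `𝓕`:
`(F ∥_ξ α)(z, X) = (det α)^(ξ/2) 𝔍(α,z)^(-ξ) F(αz, (det α)⁻¹ 𝔍(α,z)^2 (X - 𝔎(α,z)))`. -/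
def polyActG (ξ : ℤ) (F : ℂ → Polynomial ℂ) (α : GL2P) : ℂ → Polynomial ℂ := fun z =>
  Polynomial.C (detpow α ξ * gJ α z ^ (-ξ)) *
    (F (gact α z)).comp
      (Polynomial.C ((gdet α : ℂ)⁻¹ * gJ α z ^ 2) * (Polynomial.X - Polynomial.C (gK α z)))

/-- The weight-`l` action `Φ |^J_l γ` of `SL(2,ℝ)` on formal power series over `𝓕`:
`(Φ |^J_l γ)(z, X) = 𝔍(γ,z)^(-l) e^(-𝔎(γ,z) X) Φ(γz, 𝔍(γ,z)^(-2) X)`. -/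
def psAct (l : ℤ) (Φ : ℂ → PowerSeries ℂ) (γ : SL2R) : ℂ → PowerSeries ℂ := fun z =>
  PowerSeries.C (jJ γ z ^ (-l)) *
    (PowerSeries.mk fun n => (-(kK γ z)) ^ n / (n.factorial : ℂ)) *
    PowerSeries.rescale (jJ γ z ^ (-2 : ℤ)) (Φ (mact γ z))

/-- The weight-`l` action `Φ |^J_l α` of `GL⁺(2,ℝ)` on formal power series over `𝓕`:
`(Φ |^J_l α)(z, X) = (det α)^(l/2) 𝔍(α,z)^(-l) e^(-𝔎(α,z) X) Φ(αz, (det α) 𝔍(α,z)^(-2) X)`. -/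
def psActG (l : ℤ) (Φ : ℂ → PowerSeries ℂ) (α : GL2P) : ℂ → PowerSeries ℂ := fun z =>
  PowerSeries.C (detpow α l * gJ α z ^ (-l)) *
    (PowerSeries.mk fun n => (-(gK α z)) ^ n / (n.factorial : ℂ)) *
    PowerSeries.rescale ((gdet α : ℂ) * gJ α z ^ (-2 : ℤ)) (Φ (gact α z))

/-- The map `Π^δ_m`: for `Φ(z,X) = Σ_k φ_k(z) X^(k+δ)`,
`(Π^δ_m Φ)(z, X) = Σ_{r=0}^m (1/r!) φ_(m-r)(z) X^r`. -/
def PiDM (δ m : ℕ) (Φ : ℂ → PowerSeries ℂ) : ℂ → Polynomial ℂ := fun z =>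
  ∑ r ∈ Finset.range (m + 1),
    Polynomial.C ((PowerSeries.coeff (m - r + δ) (Φ z)) / (r.factorial : ℂ)) *
      Polynomial.X ^ r

/-- Membership in `𝓕_m[X]`: degree at most `m` and holomorphic coefficients. -/
def InFmX (m : ℕ) (F : ℂ → Polynomial ℂ) : Prop :=
  (∀ z : ℂ, (F z).degree ≤ (m : WithBot ℕ)) ∧ ∀ r : ℕ, Hol fun z => (F z).coeff r

/-- Membership in `𝓕[[X]]_δ = X^δ 𝓕[[X]]` with holomorphic coefficients. -/
def InFXd (δ : ℕ) (Φ : ℂ → PowerSeries ℂ) : Prop :=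
  (∀ z : ℂ, ∀ k < δ, PowerSeries.coeff k (Φ z) = 0) ∧
    ∀ k : ℕ, Hol fun z => PowerSeries.coeff k (Φ z)

/-- `QP^m_ξ(Γ)`: quasimodular polynomials of weight `ξ` and degree at most `m` for `Γ`. -/
def IsQP (Γ : Subgroup SL2R) (ξ : ℤ) (m : ℕ) (F : ℂ → Polynomial ℂ) : Prop :=
  InFmX m F ∧ ∀ γ ∈ Γ, ∀ z ∈ UHP, polyAct ξ F γ z = F z

/-- `J_l(Γ)_δ`: Jacobi-like forms of weight `l` for `Γ` lying in `𝓕[[X]]_δ`. -/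
def IsJF (Γ : Subgroup SL2R) (l : ℤ) (δ : ℕ) (Φ : ℂ → PowerSeries ℂ) : Prop :=
  InFXd δ Φ ∧ ∀ γ ∈ Γ, ∀ z ∈ UHP, psAct l Φ γ z = Φ z

/-- `M_μ(Γ)`: modular forms of weight `μ` for `Γ` (cusp conditions suppressed). -/
def IsModular (Γ : Subgroup SL2R) (μ : ℤ) (f : ℂ → ℂ) : Prop :=
  Hol f ∧ ∀ γ ∈ Γ, ∀ z ∈ UHP, jJ γ z ^ (-μ) * f (mact γ z) = f z

/-- `QM^m_ξ(Γ)`: quasimodular forms of weight `ξ` and depth at most `m` for `Γ`. -/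
def IsQM (Γ : Subgroup SL2R) (ξ : ℤ) (m : ℕ) (f : ℂ → ℂ) : Prop :=
  Hol f ∧ ∃ g : ℕ → ℂ → ℂ, (∀ r, Hol (g r)) ∧
    ∀ γ ∈ Γ, ∀ z ∈ UHP,
      jJ γ z ^ (-ξ) * f (mact γ z) = ∑ r ∈ Finset.range (m + 1), g r z * kK γ z ^ r

/-- The factorial `t!` of an integer `t` (equal to `(t.toNat)!`; intended for `t ≥ 0`). -/
def zfact (t : ℤ) : ℂ := (t.toNat.factorial : ℂ)

-- STATEMENT 13 def
/-- The lifting `Ξ^{λ+2δ}_m h` of a modular form to a quasimodular polynomial. -/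
def XiLift (l : ℤ) (δ m : ℕ) (h : ℂ → ℂ) : ℂ → Polynomial ℂ := fun z =>
  ∑ r ∈ Finset.range (m + 1),
    Polynomial.C ((m.factorial : ℂ) * zfact (l + 2 * (δ : ℤ) - 1) * deriv^[m - r] h z /
        ((r.factorial : ℂ) * ((m - r).factorial : ℂ) *
          zfact ((m : ℤ) - (r : ℤ) + 2 * (δ : ℤ) + l - 1))) *
      Polynomial.X ^ r


/-!
The polynomial `Ξ_m = XiLift l δ m h` satisfies `∂_X Ξ_{m+1} = (m+1) Ξ_m`, and `∂_X` intertwines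
the action `‖_ξ` with `‖_{ξ-2}`. By induction on `m`, `Ξ_m ‖ γ - Ξ_m` is therefore a constant
polynomial, and it vanishes at `X = 𝔎(γ,z)`, where `Ξ_m ‖ γ` only sees the constant coefficient
`h^{(m)}(γz)`. This last comparison is the classical transformation law of derivatives of a
modular form `h` of weight `μ = L + 1`:
`h^{(n)}(γz) = 𝔍(γ,z)^{2n+μ} Σ_{p+t=n} (n! (n+L)! / (p! t! (t+L)!)) 𝔎(γ,z)^p h^{(t)}(z)`,
proved by differentiating it once more, using `d(γz)/dz = 𝔍^{-2}` and `d𝔎/dz = -𝔎²`.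
-/

open Polynomial Finset

theorem Polynomial.eq_of_derivative_eq_of_eval_eq {R : Type*} [Ring R] [IsAddTorsionFree R]
    {P Q : R[X]} (hder : derivative P = derivative Q) {a : R} (heval : P.eval a = Q.eval a) :
    P = Q := by
  have hconst := eq_C_of_derivative_eq_zero (p := P - Q) (by rw [derivative_sub, hder, sub_self])
  have hzero : (P - Q).coeff 0 = 0 := by
    simpa [heval] using (congrArg (eval a) hconst).symm
  rw [hzero, map_zero] at hconst
  exact sub_eq_zero.mp hconst

lemma isOpen_UHP : IsOpen UHP := isOpen_lt continuous_const Complex.continuous_im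

lemma Hol.iterate_deriv {h : ℂ → ℂ} (hh : Hol h) (n : ℕ) : Hol (deriv^[n] h) := by
  induction n with
  | zero => exact hh
  | succ n ih => exact Function.iterate_succ_apply' deriv n h ▸ ih.deriv isOpen_UHP

lemma Hol.hasDerivAt_iterate_deriv {h : ℂ → ℂ} (hh : Hol h) (n : ℕ) {z : ℂ} (hz : z ∈ UHP) :
    HasDerivAt (deriv^[n] h) (deriv^[n + 1] h z) z := by
  rw [Function.iterate_succ_apply']
  exact ((hh.iterate_deriv n).differentiableAt (isOpen_UHP.mem_nhds hz)).hasDerivAt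

section Moebius

variable (γ : SL2R) {z : ℂ}

lemma jJ_ne_zero (hz : z ∈ UHP) : jJ γ z ≠ 0 :=
  UpperHalfPlane.denom_ne_zero_of_im (Matrix.SpecialLinearGroup.toGL γ) (ne_of_gt hz)

lemma mact_mem_UHP (hz : z ∈ UHP) : mact γ z ∈ UHP := by
  have him := UpperHalfPlane.moebius_im (Matrix.SpecialLinearGroup.toGL γ) z
  have hpos := UpperHalfPlane.normSq_denom_pos (Matrix.SpecialLinearGroup.toGL γ) (ne_of_gt hz)
  simp only [Matrix.SpecialLinearGroup.coeToGL_det, Units.val_one, one_mul] at him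
  show 0 < (mact γ z).im
  exact him ▸ div_pos hz hpos

lemma hasDerivAt_jJ (z : ℂ) : HasDerivAt (jJ γ) ((γ 1 0 : ℝ) : ℂ) z :=
  (((hasDerivAt_id z).const_mul _).add_const _).congr_deriv (mul_one _)

lemma hasDerivAt_kK (hz : z ∈ UHP) : HasDerivAt (kK γ) (-kK γ z ^ 2) z := by
  refine ((hasDerivAt_const z ((γ 1 0 : ℝ) : ℂ)).div (hasDerivAt_jJ γ z)
    (jJ_ne_zero γ hz)).congr_deriv ?_
  rw [kK]
  field_simp
  ring

lemma hasDerivAt_mact (hz : z ∈ UHP) : HasDerivAt (mact γ) (jJ γ z ^ (-2 : ℤ)) z := by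
  have hnum : HasDerivAt (fun w : ℂ => ((γ 0 0 : ℝ) : ℂ) * w + ((γ 0 1 : ℝ) : ℂ))
      ((γ 0 0 : ℝ) : ℂ) z :=
    (((hasDerivAt_id z).const_mul _).add_const _).congr_deriv (mul_one _)
  have hdet : ((γ 0 0 : ℝ) : ℂ) * (γ 1 1 : ℝ) - (γ 0 1 : ℝ) * (γ 1 0 : ℝ) = 1 := by
    exact_mod_cast (Matrix.det_fin_two (γ : Matrix (Fin 2) (Fin 2) ℝ)).symm.trans γ.2
  refine (hnum.div (hasDerivAt_jJ γ z) (jJ_ne_zero γ hz)).congr_deriv ?_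
  rw [zpow_neg, zpow_two, jJ]
  linear_combination hdet / ((γ 1 0 : ℝ) * z + (γ 1 1 : ℝ)) ^ 2

lemma hasDerivAt_jJ_pow (hz : z ∈ UHP) (k : ℕ) :
    HasDerivAt (fun w => jJ γ w ^ k) (k * kK γ z * jJ γ z ^ k) z := by
  refine ((hasDerivAt_jJ γ z).fun_pow k).congr_deriv ?_
  rw [kK]
  rcases k with _ | k
  · simp
  · field_simp [jJ_ne_zero γ hz]
    simp only [Nat.add_sub_cancel]
    ring

lemma hasDerivAt_kK_pow (hz : z ∈ UHP) (p : ℕ) :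
    HasDerivAt (fun w => kK γ w ^ p) (-(p * kK γ z ^ (p + 1))) z := by
  refine ((hasDerivAt_kK γ hz).fun_pow p).congr_deriv ?_
  rcases p with _ | p
  · simp
  · push_cast
    ring

end Moebius

def derivTransformCoeff (L p t : ℕ) : ℂ :=
  ((p + t).factorial * (p + t + L).factorial : ℂ) / (p.factorial * t.factorial * (t + L).factorial)

namespace derivTransformCoeff

lemma zero_left (L t : ℕ) : derivTransformCoeff L 0 t = 1 := by
  simp [derivTransformCoeff, Nat.factorial_ne_zero]

lemma succ_zero (L p : ℕ) :
    derivTransformCoeff L (p + 1) 0 = (p + L + 1) * derivTransformCoeff L p 0 := by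
  simp only [derivTransformCoeff, add_zero, zero_add, Nat.factorial_zero, Nat.cast_one, mul_one]
  rw [show p + 1 + L = p + L + 1 by ring, Nat.factorial_succ, Nat.factorial_succ]
  push_cast
  have : (p : ℂ) + 1 ≠ 0 := Nat.cast_add_one_ne_zero p
  field_simp

lemma succ_succ (L p t : ℕ) :
    derivTransformCoeff L (p + 1) (t + 1) =
      (p + 2 * t + L + 3) * derivTransformCoeff L p (t + 1) + derivTransformCoeff L (p + 1) t := by
  simp only [derivTransformCoeff]
  rw [show p + 1 + (t + 1) = p + t + 1 + 1 by ring, show p + 1 + t = p + t + 1 by ring,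
    show p + (t + 1) = p + t + 1 by ring, show p + t + 1 + 1 + L = p + t + L + 1 + 1 by ring,
    show p + t + 1 + L = p + t + L + 1 by ring, show t + 1 + L = t + L + 1 by ring]
  simp only [Nat.factorial_succ]
  push_cast
  have : (p : ℂ) + 1 ≠ 0 := Nat.cast_add_one_ne_zero p
  have : (t : ℂ) + 1 ≠ 0 := Nat.cast_add_one_ne_zero t
  have : (t : ℂ) + L + 1 ≠ 0 := by simpa using Nat.cast_add_one_ne_zero (R := ℂ) (t + L)
  field_simp
  ring

open Finset.Nat in
lemma sum_antidiagonal_succ_eq (L n : ℕ) (K : ℂ) (w : ℕ → ℂ) :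
    ∑ x ∈ antidiagonal (n + 1), derivTransformCoeff L x.1 x.2 * K ^ x.1 * w x.2 =
      ∑ x ∈ antidiagonal n, derivTransformCoeff L x.1 x.2 *
        ((x.1 + 2 * x.2 + L + 1) * K ^ (x.1 + 1) * w x.2 + K ^ x.1 * w (x.2 + 1)) := by
  simp only [mul_add, sum_add_distrib]
  rcases n with _ | n
  · simp [sum_antidiagonal_succ, zero_left, succ_zero]
    ring
  · conv_lhs => rw [sum_antidiagonal_succ, sum_antidiagonal_succ']
    conv_rhs => rw [sum_antidiagonal_succ', sum_antidiagonal_succ (n := n)]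
    have interior : ∑ x ∈ antidiagonal n,
        derivTransformCoeff L (x.1 + 1) (x.2 + 1) * K ^ (x.1 + 1) * w (x.2 + 1) =
          ∑ x ∈ antidiagonal n, derivTransformCoeff L x.1 (x.2 + 1) *
            ((x.1 + 2 * (x.2 + 1 : ℕ) + L + 1) * K ^ (x.1 + 1) * w (x.2 + 1)) +
          ∑ x ∈ antidiagonal n,
            derivTransformCoeff L (x.1 + 1) x.2 * (K ^ (x.1 + 1) * w (x.2 + 1)) := by
      rw [← sum_add_distrib]
      refine sum_congr rfl fun x _ => ?_
      rw [succ_succ]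
      push_cast
      ring
    simp only [zero_left, succ_zero]
    rw [interior]
    push_cast
    ring

lemma sum_antidiagonal_succ_eq' (L n : ℕ) (K : ℂ) (w : ℕ → ℂ) :
    ∑ x ∈ antidiagonal (n + 1), derivTransformCoeff L x.1 x.2 * K ^ x.1 * w x.2 =
      ((2 * n + L + 1 : ℕ) : ℂ) * K *
          ∑ x ∈ antidiagonal n, derivTransformCoeff L x.1 x.2 * K ^ x.1 * w x.2 +
        ∑ x ∈ antidiagonal n, derivTransformCoeff L x.1 x.2 *
          (-(x.1 * K ^ (x.1 + 1)) * w x.2 + K ^ x.1 * w (x.2 + 1)) := by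
  rw [sum_antidiagonal_succ_eq, mul_sum, ← sum_add_distrib]
  refine sum_congr rfl fun x hx => ?_
  rw [← mem_antidiagonal.mp hx]
  push_cast
  ring

lemma sum_antidiagonal_zero_pow (L m : ℕ) (w : ℕ → ℂ) :
    ∑ x ∈ antidiagonal m, derivTransformCoeff L x.1 x.2 * 0 ^ x.1 * w x.2 = w m := by
  rw [sum_eq_single (0, m)]
  · simp [zero_left]
  · rintro ⟨p, t⟩ hx hne
    have hp : p ≠ 0 := by rintro rfl; simp_all
    simp [hp]
  · simp

end derivTransformCoeff

theorem iterate_deriv_apply_mact (L : ℕ) {γ : SL2R} {h : ℂ → ℂ} (hh : Hol h)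
    (htrans : ∀ z ∈ UHP, jJ γ z ^ (-(L + 1 : ℤ)) * h (mact γ z) = h z) (n : ℕ) :
    ∀ z ∈ UHP, deriv^[n] h (mact γ z) = jJ γ z ^ (2 * n + L + 1) *
      ∑ x ∈ antidiagonal n, derivTransformCoeff L x.1 x.2 * kK γ z ^ x.1 * deriv^[x.2] h z := by
  induction n with
  | zero =>
    intro z hz
    simp only [Function.iterate_zero, id_eq, Finset.Nat.antidiagonal_zero, sum_singleton,
      derivTransformCoeff.zero_left, pow_zero, one_mul, mul_one, mul_zero, zero_add]
    rw [← htrans z hz, ← mul_assoc, ← zpow_natCast, ← zpow_add₀ (jJ_ne_zero γ hz)]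
    simp
  | succ n ih =>
    intro z hz
    set k := 2 * n + L + 1
    have hlhs : HasDerivAt (fun w => deriv^[n] h (mact γ w))
        (deriv^[n + 1] h (mact γ z) * jJ γ z ^ (-2 : ℤ)) z :=
      (hh.hasDerivAt_iterate_deriv n (mact_mem_UHP γ hz)).comp z (hasDerivAt_mact γ hz)
    have hsum : HasDerivAt
        (fun w => ∑ x ∈ antidiagonal n,
          derivTransformCoeff L x.1 x.2 * kK γ w ^ x.1 * deriv^[x.2] h w)
        (∑ x ∈ antidiagonal n, derivTransformCoeff L x.1 x.2 *
          (-(x.1 * kK γ z ^ (x.1 + 1)) * deriv^[x.2] h z +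
            kK γ z ^ x.1 * deriv^[x.2 + 1] h z)) z :=
      HasDerivAt.fun_sum fun x _ => (((hasDerivAt_kK_pow γ hz x.1).const_mul _).mul
        (hh.hasDerivAt_iterate_deriv x.2 hz)).congr_deriv (by ring)
    have heq := hlhs.unique (((hasDerivAt_jJ_pow γ hz k).mul hsum).congr_of_eventuallyEq
      (Filter.eventually_of_mem (isOpen_UHP.mem_nhds hz) ih))
    have hJ2 : jJ γ z ^ (-2 : ℤ) * jJ γ z ^ 2 = 1 := by
      rw [zpow_neg, zpow_two]
      field_simp [jJ_ne_zero γ hz]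
    rw [derivTransformCoeff.sum_antidiagonal_succ_eq' L n (kK γ z) (fun t => deriv^[t] h z),
      show 2 * (n + 1) + L + 1 = k + 2 by ring]
    linear_combination (jJ γ z ^ 2) * heq - deriv^[n + 1] h (mact γ z) * hJ2

section PolyAct

variable {γ : SL2R} {z : ℂ}

lemma derivative_polyAct (hz : z ∈ UHP) (ξ : ℤ) (F : ℂ → ℂ[X]) :
    derivative (polyAct ξ F γ z) = polyAct (ξ - 2) (fun w => derivative (F w)) γ z := by
  simp only [polyAct, derivative_comp, derivative_mul, derivative_C, derivative_sub, derivative_X,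
    zero_mul, zero_add, sub_zero, mul_one]
  rw [mul_left_comm, ← mul_assoc, ← C_mul, ← zpow_natCast, ← zpow_add₀ (jJ_ne_zero γ hz)]
  congr 3
  push_cast
  ring

lemma polyAct_C_mul (ξ : ℤ) (c : ℂ) (F : ℂ → ℂ[X]) :
    polyAct ξ (fun w => C c * F w) γ z = C c * polyAct ξ F γ z := by
  simp only [polyAct, mul_comp, C_comp]
  ring

lemma polyAct_zero (ξ : ℤ) : polyAct ξ (fun _ => 0) γ z = 0 := by
  simp [polyAct]

lemma eval_kK_polyAct (ξ : ℤ) (F : ℂ → ℂ[X]) :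
    (polyAct ξ F γ z).eval (kK γ z) = jJ γ z ^ (-ξ) * (F (mact γ z)).coeff 0 := by
  simp [polyAct, eval_comp, coeff_zero_eq_eval_zero]

end PolyAct

section XiLift

variable (l : ℤ) (δ : ℕ)

lemma coeff_XiLift (h : ℂ → ℂ) (m : ℕ) (z : ℂ) (k : ℕ) :
    (XiLift l δ m h z).coeff k = if k ≤ m then
      (m.factorial : ℂ) * zfact (l + 2 * (δ : ℤ) - 1) * deriv^[m - k] h z /
        ((k.factorial : ℂ) * ((m - k).factorial : ℂ) *
          zfact ((m : ℤ) - (k : ℤ) + 2 * (δ : ℤ) + l - 1)) else 0 := by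
  simp only [XiLift, finsetSum_coeff, coeff_C_mul, coeff_X_pow, mul_ite, mul_one, mul_zero,
    sum_ite_eq, mem_range, Nat.lt_succ_iff]

lemma coeff_XiLift_self (h : ℂ → ℂ) (m : ℕ) (z : ℂ) : (XiLift l δ m h z).coeff m = h z := by
  rw [coeff_XiLift, if_pos le_rfl, Nat.sub_self,
    show (m : ℤ) - m + 2 * δ + l - 1 = l + 2 * δ - 1 by ring]
  have : zfact (l + 2 * δ - 1) ≠ 0 := Nat.cast_ne_zero.mpr (Nat.factorial_ne_zero _)
  simp [Nat.factorial_ne_zero, this]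

lemma degree_XiLift_le (h : ℂ → ℂ) (m : ℕ) (z : ℂ) : (XiLift l δ m h z).degree ≤ m :=
  (degree_sum_le _ _).trans <| Finset.sup_le fun r hr =>
    (degree_C_mul_X_pow_le _ _).trans (by exact_mod_cast Nat.lt_succ_iff.mp (mem_range.mp hr))

lemma Hol.coeff_XiLift {h : ℂ → ℂ} (hh : Hol h) (m k : ℕ) :
    Hol fun z => (XiLift l δ m h z).coeff k := by
  simp only [_root_.coeff_XiLift]
  split_ifs
  · exact ((hh.iterate_deriv _).const_mul _).div_const _
  · exact differentiableOn_const 0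

lemma derivative_XiLift_zero (h : ℂ → ℂ) (z : ℂ) : derivative (XiLift l δ 0 h z) = 0 := by
  simp [XiLift]

lemma derivative_XiLift_succ (h : ℂ → ℂ) (m : ℕ) (z : ℂ) :
    derivative (XiLift l δ (m + 1) h z) = C ((m : ℂ) + 1) * XiLift l δ m h z := by
  ext k
  rw [coeff_derivative, coeff_C_mul, coeff_XiLift, coeff_XiLift]
  by_cases hk : k ≤ m
  · rw [if_pos (by omega), if_pos hk, Nat.add_sub_add_right,
      show ((m + 1 : ℕ) : ℤ) - ((k + 1 : ℕ) : ℤ) = (m : ℤ) - k by push_cast; ring,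
      Nat.factorial_succ, Nat.factorial_succ]
    have := Nat.cast_add_one_ne_zero (R := ℂ) k
    push_cast
    field_simp
  · rw [if_neg (by omega), if_neg hk]
    simp

lemma eval_XiLift (hl : 1 ≤ l + 2 * (δ : ℤ)) (h : ℂ → ℂ) (m : ℕ) (z w : ℂ) :
    (XiLift l δ m h z).eval w = ((l + 2 * δ - 1).toNat.factorial : ℂ) /
      (m + (l + 2 * δ - 1).toNat).factorial *
      ∑ x ∈ antidiagonal m,
        derivTransformCoeff (l + 2 * δ - 1).toNat x.1 x.2 * w ^ x.1 * deriv^[x.2] h z := by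
  rw [Finset.Nat.sum_antidiagonal_eq_sum_range_succ_mk, mul_sum, XiLift, eval_finsetSum]
  refine sum_congr rfl fun r hr => ?_
  have hrm : r + (m - r) = m := Nat.add_sub_of_le (Nat.lt_succ_iff.mp (mem_range.mp hr))
  rw [eval_mul, eval_C, eval_pow, eval_X, derivTransformCoeff, hrm, zfact, zfact,
    show ((m : ℤ) - r + 2 * δ + l - 1).toNat = m - r + (l + 2 * δ - 1).toNat by omega]
  have : ((m + (l + 2 * δ - 1).toNat).factorial : ℂ) ≠ 0 :=
    Nat.cast_ne_zero.mpr (Nat.factorial_ne_zero _)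
  field_simp

variable {l δ} {h : ℂ → ℂ} {γ : SL2R}

lemma eval_kK_polyAct_XiLift (hl : 1 ≤ l + 2 * (δ : ℤ)) (hh : Hol h)
    (htrans : ∀ z ∈ UHP, jJ γ z ^ (-(l + 2 * (δ : ℤ))) * h (mact γ z) = h z)
    (m : ℕ) {z : ℂ} (hz : z ∈ UHP) :
    (polyAct (l + 2 * m + 2 * δ) (XiLift l δ m h) γ z).eval (kK γ z) =
      (XiLift l δ m h z).eval (kK γ z) := by
  set L := (l + 2 * δ - 1).toNat
  have hweight : l + 2 * (δ : ℤ) = L + 1 := by omega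
  have hcancel : jJ γ z ^ (-(l + 2 * m + 2 * δ)) * jJ γ z ^ (2 * m + L + 1) = 1 := by
    rw [← zpow_natCast, ← zpow_add₀ (jJ_ne_zero γ hz), ← zpow_zero (jJ γ z)]
    congr 1
    push_cast
    omega
  rw [eval_kK_polyAct, coeff_zero_eq_eval_zero, eval_XiLift l δ hl, eval_XiLift l δ hl,
    derivTransformCoeff.sum_antidiagonal_zero_pow L m (fun t => deriv^[t] h (mact γ z)),
    iterate_deriv_apply_mact L hh (hweight ▸ htrans) m z hz, mul_left_comm,
    ← mul_assoc (jJ γ z ^ _), hcancel, one_mul]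

theorem polyAct_XiLift (hl : 1 ≤ l + 2 * (δ : ℤ)) (hh : Hol h)
    (htrans : ∀ z ∈ UHP, jJ γ z ^ (-(l + 2 * (δ : ℤ))) * h (mact γ z) = h z) (m : ℕ) :
    ∀ z ∈ UHP, polyAct (l + 2 * m + 2 * δ) (XiLift l δ m h) γ z = XiLift l δ m h z := by
  induction m with
  | zero =>
    refine fun z hz => eq_of_derivative_eq_of_eval_eq ?_ (eval_kK_polyAct_XiLift hl hh htrans 0 hz)
    simp only [derivative_polyAct hz, derivative_XiLift_zero, polyAct_zero]
  | succ m ih =>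
    refine fun z hz => eq_of_derivative_eq_of_eval_eq ?_ (eval_kK_polyAct_XiLift hl hh htrans _ hz)
    simp only [derivative_polyAct hz, derivative_XiLift_succ]
    rw [polyAct_C_mul, show l + 2 * ((m + 1 : ℕ) : ℤ) + 2 * δ - 2 = l + 2 * m + 2 * δ by
      push_cast; ring, ih z hz]

end XiLift

theorem stmt13_general (Γ : Subgroup SL2R)
    (δ : ℕ) (l : ℤ) (hl : 1 ≤ l + 2 * (δ : ℤ)) (m : ℕ)
    (h : ℂ → ℂ) (hh : IsModular Γ (l + 2 * (δ : ℤ)) h) :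
    IsQP Γ (l + 2 * (m : ℤ) + 2 * (δ : ℤ)) m (XiLift l δ m h) ∧
      ∀ z : ℂ, (XiLift l δ m h z).coeff m = h z := by
  obtain ⟨hhol, htrans⟩ := hh
  refine ⟨⟨⟨degree_XiLift_le l δ h m, hhol.coeff_XiLift l δ m⟩, ?_⟩, coeff_XiLift_self l δ h m⟩
  exact fun γ hγ => polyAct_XiLift hl hhol (htrans γ hγ) m

theorem stmt13 (Γ : Subgroup SL2R) (hΓ : DiscreteTopology Γ)
    (δ : ℕ) (hδ : 0 < δ) (l : ℤ) (hl : 1 ≤ l + 2 * (δ : ℤ)) (m : ℕ)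
    (h : ℂ → ℂ) (hh : IsModular Γ (l + 2 * (δ : ℤ)) h) :
    IsQP Γ (l + 2 * (m : ℤ) + 2 * (δ : ℤ)) m (XiLift l δ m h) ∧
      ∀ z : ℂ, (XiLift l δ m h z).coeff m = h z :=
  stmt13_general Γ δ l hl m h hh
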